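/- Let 0 < p < 1 and 0 < q < 1, let (U^n,V^n) ~ DSBS(p)^⊗n on {0,1}^n × {0,1}^n, let f,g : {0,1}^n → {0,1}^n, and set X^n = f(U^n), Y^n = g(V^n). Let p_{XY} be DSBS(q). Then D(p_{X^nY^n} ‖ p_{XY}^{⊗n}) ≥ log₂((1−q)/q) · E[d_H(X^n,Y^n)] + n·( log₂((1−p)/(1−q)) − p·log₂((1−p)/p) ), with equality if and only if both f and g are bijections. In particular, for q = p, D(p_{X^nY^n} ‖ p_{XY}^{⊗n}) ≥ log₂((1−p)/p) · ( E[d_H(X^n,Y^n)] − np ). -/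

import Mathlib

open Finset

/-- KL divergence in bits (finite-alphabet sum form, convention `0 · log 0 = 0`). -/
noncomputable def klDiv {α : Type*} [Fintype α] (p q : α → ℝ) : ℝ :=
  ∑ a, p a * Real.logb 2 (p a / q a)

/-- The pmf of one DSBS(p) pair on `{0,1}` (encoded by `Bool`). -/
noncomputable def dsbsPair (p : ℝ) (uv : Bool × Bool) : ℝ :=
  if uv.1 = uv.2 then (1 - p) / 2 else p / 2

/-- Joint law of `(f(U^n), g(V^n))` when `(U^n,V^n) ~ DSBS(p)^{⊗n}`. -/
noncomputable def imageLaw (p : ℝ) (n : ℕ) (f g : (Fin n → Bool) → (Fin n → Bool))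
    (xy : (Fin n → Bool) × (Fin n → Bool)) : ℝ :=
  ∑ u : Fin n → Bool, ∑ v : Fin n → Bool,
    (∏ i, dsbsPair p (u i, v i)) * (if f u = xy.1 then (1:ℝ) else 0) *
      (if g v = xy.2 then (1:ℝ) else 0)

/-- Expected Hamming distance `E[d_H(f(U^n), g(V^n))]` under `DSBS(p)^{⊗n}`. -/
noncomputable def expDH (p : ℝ) (n : ℕ) (f g : (Fin n → Bool) → (Fin n → Bool)) : ℝ :=
  ∑ u : Fin n → Bool, ∑ v : Fin n → Bool,
    (∏ i, dsbsPair p (u i, v i)) * (hammingDist (f u) (g v) : ℝ)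

/-!
Write `μ` for the law of `(Uⁿ, Vⁿ)` and `φ = Prod.map f g`, so that `p_{XⁿYⁿ}` is the
pushforward of `μ` along `φ`. Since
`log₂ p_{XY}^{⊗n}(x, y) = n log₂((1-q)/2) - d_H(x, y) log₂((1-q)/q)`, and `H(Uⁿ, Vⁿ)` is
computed the same way from `E[d_H(Uⁿ, Vⁿ)] = np`, the divergence is the right-hand side plus
`H(Uⁿ, Vⁿ) - H(Xⁿ, Yⁿ) = H(Uⁿ, Vⁿ | Xⁿ, Yⁿ) ≥ 0`. As `μ` has full support, this conditional
entropy vanishes iff `φ` is injective, i.e. iff `f` and `g` are; on a finite alphabet that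
means bijective.
-/

open Real

section Fibers

variable {α β : Type*} [Fintype α] [DecidableEq β] (φ : α → β) {w : α → ℝ}

lemma sum_sum_fiber_mul [Fintype β] (w : α → ℝ) (h : β → ℝ) :
    ∑ b, (∑ a with φ a = b, w a) * h b = ∑ a, w a * h (φ a) := by
  rw [← Finset.sum_fiberwise univ φ (fun a => w a * h (φ a))]
  refine Finset.sum_congr rfl fun b _ => ?_
  rw [Finset.sum_mul]
  exact Finset.sum_congr rfl fun a ha => by rw [(mem_filter.1 ha).2]

lemma le_sum_fiber (hw : ∀ a, 0 ≤ w a) (a : α) : w a ≤ ∑ a' with φ a' = φ a, w a' :=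
  Finset.single_le_sum (fun a' _ => hw a') (by simp)

lemma sum_fiber_eq_iff_injective (hw : ∀ a, 0 < w a) :
    (∀ a, ∑ a' with φ a' = φ a, w a' = w a) ↔ Function.Injective φ := by
  classical
  refine ⟨fun h a b hab => ?_, fun hφ a => ?_⟩
  · by_contra hne
    have hpair : w a + w b ≤ ∑ a' with φ a' = φ a, w a' := by
      rw [← Finset.sum_pair hne]
      exact Finset.sum_le_sum_of_subset_of_nonneg (by simp [Finset.insert_subset_iff, hab])
        fun a' _ _ => (hw a').le
    linarith [h a, hw b]
  · exact Finset.sum_eq_single_of_mem a (by simp) fun a' ha' hne =>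
      absurd (hφ (mem_filter.1 ha').2) hne

variable {b : ℝ} (hb : 1 < b)
include hb

lemma mul_logb_le_mul_logb_sum_fiber (hw : ∀ a, 0 < w a) (a : α) :
    w a * logb b (w a) ≤ w a * logb b (∑ a' with φ a' = φ a, w a') :=
  mul_le_mul_of_nonneg_left
    (logb_le_logb_of_le hb (hw a) (le_sum_fiber φ (fun a => (hw a).le) a)) (hw a).le

lemma sum_mul_logb_le_sum_mul_logb_sum_fiber (hw : ∀ a, 0 < w a) :
    ∑ a, w a * logb b (w a) ≤ ∑ a, w a * logb b (∑ a' with φ a' = φ a, w a') :=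
  Finset.sum_le_sum fun a _ => mul_logb_le_mul_logb_sum_fiber φ hb hw a

lemma sum_mul_logb_sum_fiber_eq_iff_injective (hw : ∀ a, 0 < w a) :
    ∑ a, w a * logb b (∑ a' with φ a' = φ a, w a') = ∑ a, w a * logb b (w a) ↔
      Function.Injective φ := by
  rw [eq_comm, Finset.sum_eq_sum_iff_of_le fun a _ => mul_logb_le_mul_logb_sum_fiber φ hb hw a,
    ← sum_fiber_eq_iff_injective φ hw]
  refine forall_congr' fun a => ?_
  have hfib := (hw a).trans_le (le_sum_fiber φ (fun a => (hw a).le) a)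
  rw [mul_right_inj' (hw a).ne', (logb_injOn_pos hb).eq_iff (hw a) hfib, eq_comm]
  simp

end Fibers

section ProductLaw

variable {ι β : Type*} [Fintype ι] [DecidableEq ι] [Fintype β] {F : β → ℝ}

lemma sum_prod_apply_eq_one (hF : ∑ b, F b = 1) : ∑ w : ι → β, ∏ i, F (w i) = 1 := by
  rw [← Fintype.prod_sum fun _ => F, hF, Finset.prod_const_one]

lemma sum_prod_apply_mul_apply (hF : ∑ b, F b = 1) (G : β → ℝ) (j : ι) :
    ∑ w : ι → β, (∏ i, F (w i)) * G (w j) = ∑ b, F b * G b := by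
  have hmarg : ∀ w : ι → β,
      (∏ i, F (w i)) * G (w j) = ∏ i, F (w i) * if i = j then G (w i) else 1 := by
    intro w
    rw [Finset.prod_mul_distrib, Finset.prod_ite_eq' univ j fun i => G (w i), if_pos (mem_univ j)]
  simp_rw [hmarg, ← Fintype.prod_sum fun i b => F b * if i = j then G b else 1]
  rw [Finset.prod_eq_single j (fun i _ hi => by simp [hi, hF]) (by simp)]
  simp

lemma sum_prod_apply_mul_sum_apply (hF : ∑ b, F b = 1) (G : β → ℝ) :
    ∑ w : ι → β, (∏ i, F (w i)) * ∑ j, G (w j) = Fintype.card ι * ∑ b, F b * G b := by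
  simp_rw [Finset.mul_sum]
  rw [Finset.sum_comm]
  simp [← Finset.mul_sum, sum_prod_apply_mul_apply hF]

end ProductLaw

section DSBS

lemma dsbsPair_pos {r : ℝ} (hr0 : 0 < r) (hr1 : r < 1) (ab : Bool × Bool) :
    0 < dsbsPair r ab := by
  unfold dsbsPair; split_ifs <;> linarith

lemma sum_dsbsPair (r : ℝ) : ∑ ab : Bool × Bool, dsbsPair r ab = 1 := by
  simp [Fintype.sum_prod_type, dsbsPair]
  ring

lemma logb_dsbsPair {r : ℝ} (hr0 : 0 < r) (hr1 : r < 1) (ab : Bool × Bool) :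
    logb 2 (dsbsPair r ab) =
      logb 2 ((1 - r) / 2) - (if ab.1 ≠ ab.2 then 1 else 0) * logb 2 ((1 - r) / r) := by
  by_cases h : ab.1 = ab.2
  · simp [dsbsPair, h]
  · have hr1' : 1 - r ≠ 0 := by linarith
    rw [dsbsPair, if_neg h, if_pos h, one_mul,
      ← logb_div (by positivity) (div_pos (by linarith) hr0).ne']
    congr 1
    field_simp

variable {ι : Type*} [Fintype ι]

noncomputable def dsbsLaw (r : ℝ) (ι : Type*) [Fintype ι] (uv : (ι → Bool) × (ι → Bool)) : ℝ :=
  ∏ i, dsbsPair r (uv.1 i, uv.2 i)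

lemma dsbsLaw_pos {r : ℝ} (hr0 : 0 < r) (hr1 : r < 1) (uv : (ι → Bool) × (ι → Bool)) :
    0 < dsbsLaw r ι uv :=
  Finset.prod_pos fun _ _ => dsbsPair_pos hr0 hr1 _

lemma logb_dsbsLaw {r : ℝ} (hr0 : 0 < r) (hr1 : r < 1) (uv : (ι → Bool) × (ι → Bool)) :
    logb 2 (dsbsLaw r ι uv) =
      Fintype.card ι * logb 2 ((1 - r) / 2) -
        hammingDist uv.1 uv.2 * logb 2 ((1 - r) / r) := by
  rw [dsbsLaw, logb_prod _ _ fun i _ => (dsbsPair_pos hr0 hr1 _).ne']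
  simp only [logb_dsbsPair hr0 hr1, Finset.sum_sub_distrib, ← Finset.sum_mul, hammingDist,
    Finset.card_filter, Nat.cast_sum, Nat.cast_ite, Nat.cast_one, Nat.cast_zero]
  simp

variable [DecidableEq ι]

lemma sum_dsbsLaw_eq_sum_pi (r : ℝ) (h : ℝ → (ι → Bool) × (ι → Bool) → ℝ) :
    ∑ uv, h (dsbsLaw r ι uv) uv =
      ∑ w : ι → Bool × Bool, h (∏ i, dsbsPair r (w i)) (fun i => (w i).1, fun i => (w i).2) :=
  ((Equiv.arrowProdEquivProdArrow ι _ _).sum_comp fun uv => h (dsbsLaw r ι uv) uv).symm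

lemma sum_dsbsLaw (r : ℝ) : ∑ uv, dsbsLaw r ι uv = 1 := by
  rw [sum_dsbsLaw_eq_sum_pi r fun μ _ => μ]
  exact sum_prod_apply_eq_one (sum_dsbsPair r)

lemma sum_dsbsLaw_mul_hammingDist (r : ℝ) :
    ∑ uv, dsbsLaw r ι uv * hammingDist uv.1 uv.2 = Fintype.card ι * r := by
  rw [sum_dsbsLaw_eq_sum_pi r fun μ uv => μ * hammingDist uv.1 uv.2]
  simp only [hammingDist, Finset.card_filter, Nat.cast_sum, Nat.cast_ite, Nat.cast_one,
    Nat.cast_zero]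
  rw [sum_prod_apply_mul_sum_apply (sum_dsbsPair r)
    fun ab => if ab.1 ≠ ab.2 then (1 : ℝ) else 0]
  simp [Fintype.sum_prod_type, dsbsPair]

lemma sum_dsbsLaw_mul_logb_dsbsLaw_comp (p : ℝ) {q : ℝ} (hq0 : 0 < q) (hq1 : q < 1)
    (ψ : (ι → Bool) × (ι → Bool) → (ι → Bool) × (ι → Bool)) :
    ∑ uv, dsbsLaw p ι uv * logb 2 (dsbsLaw q ι (ψ uv)) =
      Fintype.card ι * logb 2 ((1 - q) / 2) -
        logb 2 ((1 - q) / q) * ∑ uv, dsbsLaw p ι uv * hammingDist (ψ uv).1 (ψ uv).2 := by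
  simp only [logb_dsbsLaw hq0 hq1, mul_sub, Finset.sum_sub_distrib, Finset.mul_sum]
  rw [← Finset.sum_mul, sum_dsbsLaw]
  congr 1
  · ring
  · exact Finset.sum_congr rfl fun uv _ => by ring

end DSBS

lemma klDiv_eq_sub {α : Type*} [Fintype α] (P : α → ℝ) {Q : α → ℝ} (hQ : ∀ a, Q a ≠ 0) :
    klDiv P Q = ∑ a, P a * logb 2 (P a) - ∑ a, P a * logb 2 (Q a) := by
  rw [klDiv, ← Finset.sum_sub_distrib]
  refine Finset.sum_congr rfl fun a _ => ?_
  rcases eq_or_ne (P a) 0 with hP | hP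
  · simp [hP]
  · rw [logb_div hP (hQ a), mul_sub]

section ImageLaw

variable (p : ℝ) {n : ℕ} (f g : (Fin n → Bool) → (Fin n → Bool))

lemma imageLaw_eq_sum_fiber (xy : (Fin n → Bool) × (Fin n → Bool)) :
    imageLaw p n f g xy = ∑ uv with Prod.map f g uv = xy, dsbsLaw p (Fin n) uv := by
  rw [Finset.sum_filter, Fintype.sum_prod_type]
  refine Finset.sum_congr rfl fun u _ => Finset.sum_congr rfl fun v _ => ?_
  simp only [Prod.map, Prod.ext_iff, ite_and, dsbsLaw]
  split_ifs <;> simp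

lemma expDH_eq_sum_dsbsLaw :
    expDH p n f g =
      ∑ uv, dsbsLaw p (Fin n) uv * hammingDist (Prod.map f g uv).1 (Prod.map f g uv).2 := by
  rw [Fintype.sum_prod_type]
  rfl

lemma klDiv_imageLaw_eq {q : ℝ} (hp0 : 0 < p) (hp1 : p < 1) (hq0 : 0 < q) (hq1 : q < 1) :
    klDiv (imageLaw p n f g) (fun xy => ∏ i, dsbsPair q (xy.1 i, xy.2 i)) =
      logb 2 ((1 - q) / q) * expDH p n f g
        + n * (logb 2 ((1 - p) / (1 - q)) - p * logb 2 ((1 - p) / p))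
        + (∑ uv, dsbsLaw p (Fin n) uv *
              logb 2 (∑ uv' with Prod.map f g uv' = Prod.map f g uv, dsbsLaw p (Fin n) uv')
            - ∑ uv, dsbsLaw p (Fin n) uv * logb 2 (dsbsLaw p (Fin n) uv)) := by
  have hentropy := sum_dsbsLaw_mul_logb_dsbsLaw_comp p hp0 hp1 (ι := Fin n) id
  have hcross := sum_dsbsLaw_mul_logb_dsbsLaw_comp p hq0 hq1 (Prod.map f g)
  simp only [id, sum_dsbsLaw_mul_hammingDist, Fintype.card_fin] at hentropy hcross
  change klDiv _ (dsbsLaw q (Fin n)) = _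
  have hp' : 1 - p ≠ 0 := by linarith
  have hq' : 1 - q ≠ 0 := by linarith
  rw [klDiv_eq_sub _ fun xy => (dsbsLaw_pos hq0 hq1 xy).ne',
    funext (imageLaw_eq_sum_fiber p f g), sum_sum_fiber_mul, sum_sum_fiber_mul, hcross,
    expDH_eq_sum_dsbsLaw, hentropy, logb_div hp' hq', logb_div hp' two_ne_zero,
    logb_div hq' two_ne_zero]
  ring

end ImageLaw

/-- Lemma 6 of the paper: a lower bound on
`D(p_{X^nY^n} ‖ DSBS(q)^{⊗n})` in terms of the expected Hamming distance, with equality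
iff both `f` and `g` are bijections; and the specialization `q = p`. -/
theorem stmt9 (p q : ℝ) (hp0 : 0 < p) (hp1 : p < 1) (hq0 : 0 < q) (hq1 : q < 1)
    (n : ℕ) (f g : (Fin n → Bool) → (Fin n → Bool)) :
    (klDiv (imageLaw p n f g) (fun xy => ∏ i, dsbsPair q (xy.1 i, xy.2 i))
        ≥ Real.logb 2 ((1 - q) / q) * expDH p n f g
          + n * (Real.logb 2 ((1 - p) / (1 - q)) - p * Real.logb 2 ((1 - p) / p))) ∧
    (klDiv (imageLaw p n f g) (fun xy => ∏ i, dsbsPair q (xy.1 i, xy.2 i))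
        = Real.logb 2 ((1 - q) / q) * expDH p n f g
          + n * (Real.logb 2 ((1 - p) / (1 - q)) - p * Real.logb 2 ((1 - p) / p))
      ↔ Function.Bijective f ∧ Function.Bijective g) ∧
    (q = p →
      klDiv (imageLaw p n f g) (fun xy => ∏ i, dsbsPair q (xy.1 i, xy.2 i))
        ≥ Real.logb 2 ((1 - p) / p) * (expDH p n f g - n * p)) := by
  have hμ := dsbsLaw_pos hp0 hp1 (ι := Fin n)
  have hgap := sum_mul_logb_le_sum_mul_logb_sum_fiber (Prod.map f g) one_lt_two hμ
  have hbound : klDiv (imageLaw p n f g) (fun xy => ∏ i, dsbsPair q (xy.1 i, xy.2 i))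
      ≥ logb 2 ((1 - q) / q) * expDH p n f g
        + n * (logb 2 ((1 - p) / (1 - q)) - p * logb 2 ((1 - p) / p)) := by
    rw [klDiv_imageLaw_eq p f g hp0 hp1 hq0 hq1]
    linarith
  refine ⟨hbound, ?_, ?_⟩
  · rw [klDiv_imageLaw_eq p f g hp0 hp1 hq0 hq1, add_eq_left, sub_eq_zero,
      sum_mul_logb_sum_fiber_eq_iff_injective (Prod.map f g) one_lt_two hμ,
      Prod.map_injective, Finite.injective_iff_bijective, Finite.injective_iff_bijective]
  · rintro rfl
    rw [div_self (by linarith : 1 - q ≠ 0), logb_one] at hbound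
    linarith
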